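/- arXiv:2305.02378 — 3 statements merged into one kernel-verified Lean document; each statement's English description precedes it below -/
import Mathlib

section
/- Let 𝔰 be the Lie algebra with orthonormal basis E₁,E₂,E₃ and brackets [E₃,E₁] = λ₁E₁, [E₃,E₂] = λ₂E₂, [E₁,E₂] = 0, with λ₁ ≠ 0. If λ₁ ≠ λ₂ and λ₂ ≠ 0, then every skew-symmetric derivation D of 𝔰 is zero. -/
/-- The Lie bracket of `𝔰` in coordinates with respect to the orthonormal basis `E₁,E₂,E₃`. -/
def bk (l1 l2 : ℝ) (u v : ℝ × ℝ × ℝ) : ℝ × ℝ × ℝ :=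
  (l1 * (u.2.2 * v.1 - v.2.2 * u.1), l2 * (u.2.2 * v.2.1 - v.2.2 * u.2.1), 0)

/-- The inner product making `E₁,E₂,E₃` orthonormal, in coordinates. -/
def ip (u v : ℝ × ℝ × ℝ) : ℝ := u.1 * v.1 + u.2.1 * v.2.1 + u.2.2 * v.2.2

/-- if `λ₁ ≠ 0`, `λ₂ ≠ 0` and `λ₁ ≠ λ₂`, then every skew-symmetric
derivation of `𝔰` is zero. -/
theorem skew_derivation_zero (l1 l2 : ℝ) (h1 : l1 ≠ 0) (h2 : l2 ≠ 0) (h12 : l1 ≠ l2)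
    (D : (ℝ × ℝ × ℝ) →ₗ[ℝ] (ℝ × ℝ × ℝ))
    (hder : ∀ u v, D (bk l1 l2 u v) = bk l1 l2 (D u) v + bk l1 l2 u (D v))
    (hskew : ∀ u v, ip (D u) v = -ip u (D v)) :
    D = 0 := by
  have h31 := hder (0,0,1) (1,0,0)
  have h32 := hder (0,0,1) (0,1,0)
  have s11 := hskew (1,0,0) (1,0,0)
  have s22 := hskew (0,1,0) (0,1,0)
  have s13 := hskew (1,0,0) (0,0,1)
  have s23 := hskew (0,1,0) (0,0,1)
  have hb1 : bk l1 l2 (0,0,1) (1,0,0) = l1 • ((1:ℝ),(0:ℝ),(0:ℝ)) := by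
    simp [bk, Prod.ext_iff]
  have hb2 : bk l1 l2 (0,0,1) (0,1,0) = l2 • ((0:ℝ),(1:ℝ),(0:ℝ)) := by
    simp [bk, Prod.ext_iff]
  rw [hb1, map_smul] at h31
  rw [hb2, map_smul] at h32
  set a := D (1,0,0) with hadef
  set b := D (0,1,0) with hbdef
  set c := D (0,0,1) with hcdef
  simp only [bk, ip, Prod.ext_iff, Prod.smul_def, smul_eq_mul] at h31 h32 s11 s22 s13 s23
  norm_num at h31 h32 s11 s22 s13 s23
  obtain ⟨e1a, e1b, e1c⟩ := h31
  obtain ⟨e2a, e2b, e2c⟩ := h32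
  have ha1 : a.1 = 0 := by linarith
  have ha2 : a.2.1 = 0 := e1b.resolve_left h12
  have ha3 : a.2.2 = 0 := e1c.resolve_left h1
  have hb1' : b.1 = 0 := e2a.resolve_left (fun h => h12 h.symm)
  have hb2' : b.2.1 = 0 := by linarith
  have hb3 : b.2.2 = 0 := e2c.resolve_left h2
  have hc3 : c.2.2 = 0 := e1a.resolve_left h1
  have hc1 : c.1 = 0 := by linarith [s13]
  have hc2 : c.2.1 = 0 := by linarith [s23]
  have hA : a = 0 := by
    have : a = (a.1, a.2.1, a.2.2) := rfl
    rw [this, ha1, ha2, ha3]; rfl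
  have hB : b = 0 := by
    have : b = (b.1, b.2.1, b.2.2) := rfl
    rw [this, hb1', hb2', hb3]; rfl
  have hC : c = 0 := by
    have : c = (c.1, c.2.1, c.2.2) := rfl
    rw [this, hc1, hc2, hc3]; rfl
  apply LinearMap.ext; intro x
  have hx : x = x.1 • ((1:ℝ),(0:ℝ),(0:ℝ)) + x.2.1 • ((0:ℝ),(1:ℝ),(0:ℝ))
      + x.2.2 • ((0:ℝ),(0:ℝ),(1:ℝ)) := by
    simp [Prod.ext_iff]
  rw [hx, map_add, map_add, map_smul, map_smul, map_smul, ← hadef, ← hbdef, ← hcdef,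
    hA, hB, hC]
  simp
end

section
/- Suppose λ₁ = λ₂ ≠ 0 in the Lie algebra 𝔰 with brackets [E₃,E₁] = λ₁E₁, [E₃,E₂] = λ₂E₂, [E₁,E₂] = 0. Then the space of skew-symmetric derivations of 𝔰 is exactly {D_a : a ∈ ℝ} where D_a(E₁) = aE₂, D_a(E₂) = −aE₁, D_a(E₃) = 0; in particular it is one-dimensional. -/
/-- for `λ₁ = λ₂ = λ ≠ 0`, a linear map `D` is a skew-symmetric derivation
of `𝔰` iff `D E₁ = a E₂`, `D E₂ = −a E₁`, `D E₃ = 0` for some `a ∈ ℝ`. -/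
theorem skew_derivations_eq_lam (lam : ℝ) (hlam : lam ≠ 0)
    (D : (ℝ × ℝ × ℝ) →ₗ[ℝ] (ℝ × ℝ × ℝ)) :
    ((∀ u v, D (bk lam lam u v) = bk lam lam (D u) v + bk lam lam u (D v)) ∧
      (∀ u v, ip (D u) v = -ip u (D v))) ↔
    (∃ a : ℝ, D (1, 0, 0) = a • ((0 : ℝ), (1 : ℝ), (0 : ℝ)) ∧
      D (0, 1, 0) = -a • ((1 : ℝ), (0 : ℝ), (0 : ℝ)) ∧
      D (0, 0, 1) = 0) := by
  constructor
  · rintro ⟨hder, hskew⟩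
    have s11 := hskew (1,0,0) (1,0,0)
    have s22 := hskew (0,1,0) (0,1,0)
    have s33 := hskew (0,0,1) (0,0,1)
    have s12 := hskew (1,0,0) (0,1,0)
    have s13 := hskew (1,0,0) (0,0,1)
    have s23 := hskew (0,1,0) (0,0,1)
    simp [ip] at s11 s22 s33 s12 s13 s23
    have d1 := hder (0,0,1) (1,0,0)
    have d2 := hder (0,0,1) (0,1,0)
    have hb1 : bk lam lam (0,0,1) (1,0,0) = lam • ((1:ℝ),(0:ℝ),(0:ℝ)) := by
      simp [bk, Prod.ext_iff]
    have hb2 : bk lam lam (0,0,1) (0,1,0) = lam • ((0:ℝ),(1:ℝ),(0:ℝ)) := by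
      simp [bk, Prod.ext_iff]
    rw [hb1, map_smul] at d1
    rw [hb2, map_smul] at d2
    simp [bk, Prod.ext_iff, Prod.smul_def, hlam] at d1 d2
    refine ⟨(D (1,0,0)).2.1, ?_, ?_, ?_⟩
    · refine Prod.ext ?_ (Prod.ext ?_ ?_) <;> simp [Prod.smul_def]
      · linarith [s11]
      · exact d1.2
    · refine Prod.ext ?_ (Prod.ext ?_ ?_) <;> simp [Prod.smul_def]
      · linarith [s12]
      · linarith [s22]
      · exact d2.2
    · refine Prod.ext ?_ (Prod.ext ?_ ?_) <;> simp
      · linarith [s13, d1.2]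
      · linarith [s23, d2.2]
      · linarith [s33]
  · rintro ⟨a, h1, h2, h3⟩
    have hDu : ∀ u : ℝ × ℝ × ℝ, D u = (-a * u.2.1, a * u.1, 0) := by
      intro u
      have hu : u = u.1 • ((1:ℝ), (0:ℝ), (0:ℝ)) + u.2.1 • ((0:ℝ), (1:ℝ), (0:ℝ))
          + u.2.2 • ((0:ℝ), (0:ℝ), (1:ℝ)) := by
        simp [Prod.ext_iff]
      rw [hu, map_add, map_add, map_smul, map_smul, map_smul, h1, h2, h3]
      refine Prod.ext ?_ (Prod.ext ?_ ?_) <;> simp <;> ring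
    constructor
    · intro u v
      refine Prod.ext ?_ (Prod.ext ?_ ?_) <;> simp [hDu, bk] <;> ring
    · intro u v
      simp [hDu, ip]
      ring
end

section
/- Let γ(s) = (0, y(s), z(s)) be a curve with e^{−λ₂z(s)}y'(s) = cos θ(s) and z'(s) = sin θ(s), and let M be the surface φ(s,r) = (r, y(s), z(s)) in (ℝ³, g) with g = e^{−2λ₁z}dx² + e^{−2λ₂z}dy² + dz². Then the first fundamental form of M in the basis τ₁ = φ_s, τ₂ = φ_r is diag(1, e^{−2λ₁z}), the second fundamental form is diagonal with h₁₁ = −θ' − λ₂cos θ and h₂₂ = −λ₁e^{−2λ₁z}cos θ, and the mean curvature is H = −θ'(s) − (λ₁ + λ₂)cos θ(s). -/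
/-- The Levi-Civita connection of `g` on frame coefficients: `Gamma b w` is the
frame-coefficient vector `Σ bⱼ w_k ∇_{E_j}E_k`, determined by `∇_{E₁}E₁ = λ₁E₃`,
`∇_{E₁}E₃ = −λ₁E₁`, `∇_{E₂}E₂ = λ₂E₃`, `∇_{E₂}E₃ = −λ₂E₂`, all others zero. -/
def Gam (l1 l2 : ℝ) (b w : ℝ × ℝ × ℝ) : ℝ × ℝ × ℝ :=
  (-(l1 * b.1 * w.2.2), -(l2 * b.2.1 * w.2.2), l1 * b.1 * w.1 + l2 * b.2.1 * w.2.1)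

/-- for the `Ẽ₁`-invariant surface `φ(s,r) = (r, y(s), z(s))` with
`e^{−λ₂z}y' = cos θ`, `z' = sin θ`, tangent frame `τ₁ = cos θ E₂ + sin θ E₃`,
`τ₂ = e^{−λ₁z}E₁` and unit normal `ν = −sin θ E₂ + cos θ E₃`, the first fundamental
form is `diag(1, e^{−2λ₁z})`, the second fundamental form `h_{ij} = −g(∇_{τ_i}τ_j, ν)`
is diagonal with `h₁₁ = −θ' − λ₂ cos θ`, `h₂₂ = −λ₁ e^{−2λ₁z} cos θ`, and the mean
curvature is `H = −θ' − (λ₁ + λ₂) cos θ`. -/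
theorem invariant_surface_mean_curvature (l1 l2 : ℝ) (θ y z : ℝ → ℝ)
    (hθ : ContDiff ℝ (⊤ : ℕ∞) θ) (hy : ContDiff ℝ (⊤ : ℕ∞) y) (hz : ContDiff ℝ (⊤ : ℕ∞) z)
    (hy' : ∀ s, deriv y s = Real.exp (l2 * z s) * Real.cos (θ s))
    (hz' : ∀ s, deriv z s = Real.sin (θ s)) :
    let τ1 : ℝ → ℝ × ℝ × ℝ := fun s => (0, Real.cos (θ s), Real.sin (θ s))
    let τ2 : ℝ → ℝ × ℝ × ℝ := fun s => (Real.exp (-(l1 * z s)), 0, 0)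
    let ν : ℝ → ℝ × ℝ × ℝ := fun s => (0, -Real.sin (θ s), Real.cos (θ s))
    -- second fundamental form `h_{ij} = −g(∇_{τ_i}τ_j, ν)`, where along the surface
    -- `∇_{τ₁}W = dW/ds + Gamma τ₁ W` and `∇_{τ₂}W = Gamma τ₂ W` (the fields are
    -- independent of `r`):
    let h11 : ℝ → ℝ := fun s => -ip (deriv τ1 s + Gam l1 l2 (τ1 s) (τ1 s)) (ν s)
    let h12 : ℝ → ℝ := fun s => -ip (deriv τ2 s + Gam l1 l2 (τ1 s) (τ2 s)) (ν s)
    let h21 : ℝ → ℝ := fun s => -ip (Gam l1 l2 (τ2 s) (τ1 s)) (ν s)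
    let h22 : ℝ → ℝ := fun s => -ip (Gam l1 l2 (τ2 s) (τ2 s)) (ν s)
    ∀ s : ℝ,
      ip (τ1 s) (τ1 s) = 1 ∧
      ip (τ1 s) (τ2 s) = 0 ∧
      ip (τ2 s) (τ2 s) = Real.exp (-(2 * l1 * z s)) ∧
      h11 s = -deriv θ s - l2 * Real.cos (θ s) ∧
      h12 s = 0 ∧ h21 s = 0 ∧
      h22 s = -(l1 * Real.exp (-(2 * l1 * z s)) * Real.cos (θ s)) ∧
      h11 s / ip (τ1 s) (τ1 s) + h22 s / ip (τ2 s) (τ2 s)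
        = -deriv θ s - (l1 + l2) * Real.cos (θ s) := by

  intro τ1 τ2 ν h11 h12 h21 h22 s
  have hθd : DifferentiableAt ℝ θ s := (hθ.differentiable (by simp)) s
  have hzd : DifferentiableAt ℝ z s := (hz.differentiable (by simp)) s
  have hzD : HasDerivAt z (Real.sin (θ s)) s := by
    have := hzd.hasDerivAt; rwa [hz' s] at this
  have hθD : HasDerivAt θ (deriv θ s) s := hθd.hasDerivAt
  have dτ1 : deriv τ1 s = (0, -Real.sin (θ s) * deriv θ s, Real.cos (θ s) * deriv θ s) := by
    have h1 : HasDerivAt (fun s => Real.cos (θ s)) (-Real.sin (θ s) * deriv θ s) s :=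
      (Real.hasDerivAt_cos (θ s)).comp s hθD
    have h2 : HasDerivAt (fun s => Real.sin (θ s)) (Real.cos (θ s) * deriv θ s) s :=
      (Real.hasDerivAt_sin (θ s)).comp s hθD
    have h0 : HasDerivAt (fun _ : ℝ => (0 : ℝ)) 0 s := hasDerivAt_const s 0
    exact (h0.prodMk (h1.prodMk h2)).deriv
  have dτ2 : deriv τ2 s = (Real.exp (-(l1 * z s)) * (-(l1 * Real.sin (θ s))), 0, 0) := by
    have h1 : HasDerivAt (fun s => Real.exp (-(l1 * z s)))
        (Real.exp (-(l1 * z s)) * (-(l1 * Real.sin (θ s)))) s := by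
      have hin : HasDerivAt (fun s => -(l1 * z s)) (-(l1 * Real.sin (θ s))) s := by
        simpa using ((hzD.const_mul l1).fun_neg)
      exact (Real.hasDerivAt_exp _).comp s hin
    have h0 : HasDerivAt (fun _ : ℝ => (0 : ℝ)) 0 s := hasDerivAt_const s 0
    exact (h1.prodMk (h0.prodMk h0)).deriv
  have pyth : Real.sin (θ s) ^ 2 + Real.cos (θ s) ^ 2 = 1 := Real.sin_sq_add_cos_sq (θ s)
  have hexp : Real.exp (-(l1 * z s)) * Real.exp (-(l1 * z s)) = Real.exp (-(2 * l1 * z s)) := by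
    rw [← Real.exp_add]; ring_nf
  have hexppos : Real.exp (-(2 * l1 * z s)) ≠ 0 := (Real.exp_pos _).ne'
  refine ⟨?_, ?_, ?_, ?_, ?_, ?_, ?_, ?_⟩
  · simp only [τ1, ip]; nlinarith [pyth]
  · simp [τ1, τ2, ip]
  · simp only [τ2, ip]; simpa using hexp
  · simp only [h11, τ1, ν, ip, Gam, dτ1, Prod.fst_add, Prod.snd_add]
    linear_combination (-(deriv θ s) - l2 * Real.cos (θ s)) * pyth
  · simp only [h12, τ1, τ2, ν, ip, Gam, dτ2, Prod.fst_add, Prod.snd_add]; ring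
  · simp [h21, τ1, τ2, ν, ip, Gam]
  · simp only [h22, τ2, ν, ip, Gam]
    linear_combination -(l1 * Real.cos (θ s)) * hexp
  · simp only [h11, h22, τ1, τ2, ν, ip, Gam, dτ1, Prod.fst_add, Prod.snd_add]
    have e1 : (0:ℝ) * 0 + Real.cos (θ s) * Real.cos (θ s) + Real.sin (θ s) * Real.sin (θ s) = 1 := by
      linear_combination pyth
    rw [e1]
    have hE : Real.exp (-(l1 * z s)) ≠ 0 := Real.exp_ne_zero _
    field_simp
    linear_combination ((-(deriv θ s) - l2 * Real.cos (θ s)) *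
      (Real.exp (-(l1 * z s)) * Real.exp (-(l1 * z s)))) * pyth
end
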